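/- Define g̃₁(x) = sinh²x·cosh x + x·sinh x - 2x²·cosh x for x ≥ 0. Then g̃₁(0) = g̃₁'(0) = g̃₁''(0) = 0 and g̃₁'''(x) > 0 for all x > 0; consequently g̃₁(x) > 0 for all x > 0. -/

import Mathlib

/-!
`g₁`, `g₁'` and `g₁''` vanish at `0`. Written as below, each summand of `g₁'''` is
positive on `(0, ∞)` because `sinh x > x` and `cosh x > 1`; a function vanishing at `0`
with positive derivative on `(0, ∞)` is positive there, and three applications of this carry it
back up to `g₁`.
-/

open Real

theorem pos_of_hasDerivAt_pos {f f' : ℝ → ℝ} {a : ℝ} (hf : ∀ x, HasDerivAt f (f' x) x)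
    (ha : f a = 0) (hf' : ∀ x, a < x → 0 < f' x) (x : ℝ) (hx : a < x) : 0 < f x := by
  have hmono : StrictMonoOn f (Set.Ici a) :=
    strictMonoOn_of_hasDerivWithinAt_pos (convex_Ici a)
      (fun y _ ↦ (hf y).continuousAt.continuousWithinAt) (fun y _ ↦ (hf y).hasDerivWithinAt)
      (fun y hy ↦ hf' y (by simpa using hy))
  simpa [ha] using hmono Set.self_mem_Ici hx.le hx

noncomputable def g₁ (x : ℝ) : ℝ :=
  sinh x ^ 2 * cosh x + x * sinh x - 2 * x ^ 2 * cosh x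

noncomputable def g₁' (x : ℝ) : ℝ :=
  2 * sinh x * cosh x ^ 2 + sinh x ^ 3 + sinh x - 3 * x * cosh x - 2 * x ^ 2 * sinh x

noncomputable def g₁'' (x : ℝ) : ℝ :=
  2 * cosh x ^ 3 + 7 * sinh x ^ 2 * cosh x - 2 * cosh x - 7 * x * sinh x - 2 * x ^ 2 * cosh x

noncomputable def g₁''' (x : ℝ) : ℝ :=
  sinh x * (7 * sinh x ^ 2 - 2 * x ^ 2) + 9 * sinh x * (cosh x ^ 2 - 1)
    + 11 * cosh x * (sinh x * cosh x - x)

theorem hasDerivAt_g₁ (x : ℝ) : HasDerivAt g₁ (g₁' x) x := by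
  have hs := hasDerivAt_sinh x
  have hc := hasDerivAt_cosh x
  have hx := hasDerivAt_id' x
  have hsq := hasDerivAt_pow 2 x
  refine (((hs.pow 2).mul hc).add (hx.mul hs) |>.sub ((hsq.const_mul 2).mul hc)).congr_deriv ?_
  simp only [g₁', Pi.pow_apply]
  norm_num
  ring

theorem hasDerivAt_g₁' (x : ℝ) : HasDerivAt g₁' (g₁'' x) x := by
  have hs := hasDerivAt_sinh x
  have hc := hasDerivAt_cosh x
  have hx := hasDerivAt_id' x
  have hsq := hasDerivAt_pow 2 x
  refine ((((hs.const_mul 2).mul (hc.pow 2)).add (hs.pow 3)).add hs |>.sub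
    ((hx.const_mul 3).mul hc) |>.sub ((hsq.const_mul 2).mul hs)).congr_deriv ?_
  simp only [g₁'', Pi.pow_apply]
  norm_num
  ring

theorem hasDerivAt_g₁'' (x : ℝ) : HasDerivAt g₁'' (g₁''' x) x := by
  have hs := hasDerivAt_sinh x
  have hc := hasDerivAt_cosh x
  have hx := hasDerivAt_id' x
  have hsq := hasDerivAt_pow 2 x
  refine (((hc.pow 3).const_mul 2).add (((hs.pow 2).const_mul 7).mul hc) |>.sub
    (hc.const_mul 2) |>.sub ((hx.const_mul 7).mul hs) |>.sub
    ((hsq.const_mul 2).mul hc)).congr_deriv ?_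
  simp only [g₁''', Pi.pow_apply]
  norm_num
  ring

theorem g₁'''_pos {x : ℝ} (hx : 0 < x) : 0 < g₁''' x := by
  have hsinh : x < sinh x := self_lt_sinh_iff.mpr hx
  have hcosh : 1 < cosh x := one_lt_cosh.mpr hx.ne'
  have hsinh_pos : 0 < sinh x := hx.trans hsinh
  have h₁ : 0 < 7 * sinh x ^ 2 - 2 * x ^ 2 := by nlinarith
  have h₂ : 0 < cosh x ^ 2 - 1 := by nlinarith
  have h₃ : 0 < sinh x * cosh x - x := by nlinarith
  exact add_pos (add_pos (mul_pos hsinh_pos h₁) (mul_pos (mul_pos (by norm_num) hsinh_pos) h₂))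
    (mul_pos (mul_pos (by norm_num) (cosh_pos x)) h₃)

/-- `g̃₁(x) = sinh²x·cosh x + x·sinh x - 2x²·cosh x` vanishes to second order at `0`,
has strictly positive third derivative on `(0,∞)`, and hence is positive on `(0,∞)`. -/
theorem stmt12 :
    let g₁ : ℝ → ℝ := fun x =>
      Real.sinh x ^ 2 * Real.cosh x + x * Real.sinh x - 2 * x ^ 2 * Real.cosh x
    g₁ 0 = 0 ∧ deriv g₁ 0 = 0 ∧ deriv (deriv g₁) 0 = 0 ∧
    (∀ x : ℝ, 0 < x → 0 < deriv (deriv (deriv g₁)) x) ∧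
    (∀ x : ℝ, 0 < x → 0 < g₁ x) := by
  intro g
  have hg : g = g₁ := rfl
  have hderiv₁ : deriv g₁ = g₁' := funext fun x ↦ (hasDerivAt_g₁ x).deriv
  have hderiv₂ : deriv g₁' = g₁'' := funext fun x ↦ (hasDerivAt_g₁' x).deriv
  have hderiv₃ : deriv g₁'' = g₁''' := funext fun x ↦ (hasDerivAt_g₁'' x).deriv
  have hzero₀ : g₁ 0 = 0 := by simp [g₁]
  have hzero₁ : g₁' 0 = 0 := by simp [g₁']
  have hzero₂ : g₁'' 0 = 0 := by simp [g₁'']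
  have hpos₂ := pos_of_hasDerivAt_pos hasDerivAt_g₁'' hzero₂ fun _ ↦ g₁'''_pos
  have hpos₁ := pos_of_hasDerivAt_pos hasDerivAt_g₁' hzero₁ hpos₂
  rw [hg, hderiv₁, hderiv₂, hderiv₃]
  exact ⟨hzero₀, hzero₁, hzero₂, fun _ ↦ g₁'''_pos,
    pos_of_hasDerivAt_pos hasDerivAt_g₁ hzero₀ hpos₁⟩
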